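/- Let U ⊂ ℝ^l be compact and M > 0. Suppose b : [0,T] × ℝ × 𝒫₂(ℝ×U) × U → ℝ is uniformly Lipschitz in (x,ρ): for all t ∈ [0,T], u ∈ U, x, x' ∈ ℝ and ρ, ρ' ∈ 𝒫₂(ℝ×U), |b(t,x,ρ,u) − b(t,x',ρ',u)| ≤ M(|x − x'| + W_{2,ℝ×U}(ρ,ρ')). Define the extension b̃(t,x,ξ,u) := b(t,x,𝒫(ξ),u) for ξ ∈ 𝒫₂(ℝ×𝒫(U)). Then for all t ∈ [0,T], u ∈ U, x, x' ∈ ℝ and ξ, ξ' ∈ 𝒫₂(ℝ×𝒫(U)), |b̃(t,x,ξ,u) − b̃(t,x',ξ',u)| ≤ M(|x − x'| + W_{2,ℝ×𝒫(U)}(ξ,ξ')). -/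

import Mathlib

open Set MeasureTheory

/-- The squared 2-Wasserstein "distance" between two measures on `E`, relative to an
explicit squared-cost function `c`: the infimum over all couplings `π` of `μ` and `ν`
of `∫ c(x, y) dπ`. -/
noncomputable def W2sq {E : Type*} [MeasurableSpace E] (c : E → E → ℝ)
    (μ ν : Measure E) : ℝ :=
  sInf {r : ℝ | ∃ π : Measure (E × E),
    π.map Prod.fst = μ ∧ π.map Prod.snd = ν ∧ r = ∫ p, c p.1 p.2 ∂π}

/-- 2-Wasserstein distance relative to a squared cost `c`. -/
noncomputable def W2 {E : Type*} [MeasurableSpace E] (c : E → E → ℝ)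
    (μ ν : Measure E) : ℝ :=
  Real.sqrt (W2sq c μ ν)

/-- The map `𝒫 : 𝒫₂(ℝ × 𝒫(U)) → 𝒫₂(ℝ × U)`,
`𝒫(ξ)(B) = ∫_{ℝ×𝒫(U)} (δ_x ⊗ q)(B) ξ(dx, dq)`. -/
noncomputable def Pext {l : ℕ} (U : Set (EuclideanSpace ℝ (Fin l)))
    (ξ : Measure (ℝ × Measure U)) : Measure (ℝ × U) :=
  ξ.bind (fun p => (Measure.dirac p.1).prod p.2)

/-!
The bound for `b̃` is the bound for `b` once `W₂(𝒫ξ, 𝒫ξ') ≤ W₂(ξ, ξ')`. Given a coupling `π` of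
`ξ` and `ξ'`, glue to it, measurably in `(q, q')`, couplings of `q` and `q'` whose cost exceeds
`W₂(q, q')²` by at most `ε`. The result couples `𝒫ξ` and `𝒫ξ'`, and Minkowski's inequality in
`L²`, applied once under each coupling of `q, q'` and once under `π`, bounds its cost by
`((∫ (|x - x'| + W₂(q, q'))² dπ)^{1/2} + ε^{1/2})²`.

The difficulty is measurability. Partition the compact set `U` into finitely many small cells; a
plan with rational weights between the cells, completed to exact marginals by coupling the missing
mass independently, yields a coupling of `q` and `q'` that depends measurably on them. There are
countably many such plans and the infimum of their cost bounds is `W₂(q, q')²`, so `W₂` is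
measurable and the first plan within `ε` of the infimum is a measurable choice.
-/

open ProbabilityTheory ENNReal

noncomputable section

section Wasserstein

variable {E : Type*} [MeasurableSpace E] {c : E → E → ℝ} {μ ν : Measure E}

theorem isProbabilityMeasure_of_map_fst {F : Type*} [MeasurableSpace F] {π : Measure (E × F)}
    [IsProbabilityMeasure μ] (h : π.map Prod.fst = μ) : IsProbabilityMeasure π :=
  have : IsProbabilityMeasure (π.map Prod.fst) := h ▸ ‹_›
  Measure.isProbabilityMeasure_of_map Prod.fst

theorem W2sq_nonneg (hc : ∀ x y, 0 ≤ c x y) : 0 ≤ W2sq c μ ν :=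
  Real.sInf_nonneg <| by
    rintro r ⟨π, -, -, rfl⟩
    exact integral_nonneg fun p => hc p.1 p.2

theorem W2_nonneg : 0 ≤ W2 c μ ν := Real.sqrt_nonneg _

theorem W2sq_le_integral (hc : ∀ x y, 0 ≤ c x y) {π : Measure (E × E)}
    (h₁ : π.map Prod.fst = μ) (h₂ : π.map Prod.snd = ν) :
    W2sq c μ ν ≤ ∫ p, c p.1 p.2 ∂π := by
  refine csInf_le ⟨0, ?_⟩ ⟨π, h₁, h₂, rfl⟩
  rintro r ⟨π, -, -, rfl⟩
  exact integral_nonneg fun p => hc p.1 p.2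

theorem ofReal_W2sq_le_lintegral (hc : ∀ x y, 0 ≤ c x y) (hcm : Measurable (Function.uncurry c))
    {π : Measure (E × E)} (h₁ : π.map Prod.fst = μ) (h₂ : π.map Prod.snd = ν) :
    ENNReal.ofReal (W2sq c μ ν) ≤ ∫⁻ p, ENNReal.ofReal (c p.1 p.2) ∂π := by
  rcases eq_or_ne (∫⁻ p, ENNReal.ofReal (c p.1 p.2) ∂π) ∞ with h | h
  · exact h ▸ le_top
  rw [ENNReal.ofReal_le_iff_le_toReal h, ← integral_eq_lintegral_of_nonneg_ae
    (f := fun p : E × E => c p.1 p.2) (ae_of_all _ fun p => hc p.1 p.2) hcm.aestronglyMeasurable]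
  exact W2sq_le_integral hc h₁ h₂

theorem le_W2sq [IsProbabilityMeasure μ] [IsProbabilityMeasure ν] {a : ℝ}
    (h : ∀ π : Measure (E × E), π.map Prod.fst = μ → π.map Prod.snd = ν →
      a ≤ ∫ p, c p.1 p.2 ∂π) :
    a ≤ W2sq c μ ν :=
  le_csInf ⟨_, μ.prod ν, by simp, by simp, rfl⟩ <| by
    rintro r ⟨π, h₁, h₂, rfl⟩
    exact h π h₁ h₂

theorem le_ofReal_W2sq [IsProbabilityMeasure μ] [IsProbabilityMeasure ν]
    (hc : ∀ x y, 0 ≤ c x y) {a : ℝ≥0∞}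
    (h : ∀ π : Measure (E × E), π.map Prod.fst = μ → π.map Prod.snd = ν →
      a ≤ ENNReal.ofReal (∫ p, c p.1 p.2 ∂π)) :
    a ≤ ENNReal.ofReal (W2sq c μ ν) := by
  have ha : a ≠ ∞ := ne_top_of_le_ne_top ENNReal.ofReal_ne_top (h (μ.prod ν) (by simp) (by simp))
  rw [← ENNReal.ofReal_toReal ha]
  exact ENNReal.ofReal_le_ofReal <| le_W2sq fun π h₁ h₂ =>
    ENNReal.toReal_le_of_le_ofReal (integral_nonneg fun p => hc p.1 p.2) (h π h₁ h₂)

end Wasserstein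

section Minkowski

variable {α : Type*} [MeasurableSpace α] {μ : Measure α}

theorem ENNReal.sq_rpow_inv_two (x : ℝ≥0∞) : (x ^ 2) ^ (2⁻¹ : ℝ) = x := by
  rw [← ENNReal.rpow_two, ← ENNReal.rpow_mul, mul_inv_cancel₀ two_ne_zero, ENNReal.rpow_one]

theorem lintegral_add_sq_rpow_le {f g : α → ℝ≥0∞} (hf : AEMeasurable f μ)
    (hg : AEMeasurable g μ) :
    (∫⁻ a, (f a + g a) ^ 2 ∂μ) ^ (2⁻¹ : ℝ) ≤
      (∫⁻ a, f a ^ 2 ∂μ) ^ (2⁻¹ : ℝ) + (∫⁻ a, g a ^ 2 ∂μ) ^ (2⁻¹ : ℝ) := by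
  simpa [ENNReal.rpow_two] using ENNReal.lintegral_Lp_add_le hf hg one_le_two

theorem lintegral_add_const_sq_rpow_le [IsProbabilityMeasure μ] {f : α → ℝ≥0∞}
    (hf : AEMeasurable f μ) (a : ℝ≥0∞) :
    (∫⁻ x, (f x + a) ^ 2 ∂μ) ^ (2⁻¹ : ℝ) ≤ (∫⁻ x, f x ^ 2 ∂μ) ^ (2⁻¹ : ℝ) + a := by
  have h := lintegral_add_sq_rpow_le hf (aemeasurable_const (b := a))
  rwa [lintegral_const, measure_univ, mul_one, ENNReal.sq_rpow_inv_two] at h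

theorem lintegral_add_const_sq_le [IsProbabilityMeasure μ] {f : α → ℝ≥0∞}
    (hf : AEMeasurable f μ) {a w s : ℝ≥0∞} (hfw : ∫⁻ x, f x ^ 2 ∂μ ≤ w ^ 2 + s ^ 2) :
    ∫⁻ x, (f x + a) ^ 2 ∂μ ≤ (a + w + s) ^ 2 := by
  rw [← ENNReal.rpow_two, ← ENNReal.rpow_inv_le_iff two_pos]
  calc (∫⁻ x, (f x + a) ^ 2 ∂μ) ^ (2⁻¹ : ℝ) ≤ (∫⁻ x, f x ^ 2 ∂μ) ^ (2⁻¹ : ℝ) + a :=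
        lintegral_add_const_sq_rpow_le hf a
    _ ≤ (w ^ 2 + s ^ 2) ^ (2⁻¹ : ℝ) + a := by gcongr
    _ ≤ (w ^ 2) ^ (2⁻¹ : ℝ) + (s ^ 2) ^ (2⁻¹ : ℝ) + a := by
        gcongr
        exact ENNReal.rpow_add_le_add_rpow _ _ (by norm_num) (by norm_num)
    _ = a + w + s := by rw [ENNReal.sq_rpow_inv_two, ENNReal.sq_rpow_inv_two]; ring

end Minkowski

section ProbKernel

variable {X : Type*} [MeasurableSpace X]

variable (X) in
/-- Sending the other measures to `0` makes this a finite kernel, so that products of its values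
depend measurably on the parameters. -/
def probKernel : Kernel (Measure X) X where
  toFun q := if q univ = 1 then q else 0
  measurable' := Measurable.ite
    (Measure.measurable_coe MeasurableSet.univ (measurableSet_singleton 1)) measurable_id
    measurable_const

theorem probKernel_apply (q : Measure X) [IsProbabilityMeasure q] : probKernel X q = q :=
  if_pos measure_univ

instance : IsFiniteKernel (probKernel X) := by
  refine ⟨⟨1, one_lt_top, fun q => ?_⟩⟩
  change (if q univ = 1 then q else 0) univ ≤ 1
  split_ifs with h
  · exact h.le
  · simp

end ProbKernel

section ENNRealSums

variable {ι : Type*}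

theorem ENNReal.sum_tsub_of_le {s : Finset ι} {f g : ι → ℝ≥0∞} (hgf : ∀ i ∈ s, g i ≤ f i)
    (hf : ∑ i ∈ s, f i ≠ ∞) : ∑ i ∈ s, (f i - g i) = ∑ i ∈ s, f i - ∑ i ∈ s, g i := by
  refine ENNReal.eq_sub_of_add_eq (ne_top_of_le_ne_top hf (Finset.sum_le_sum hgf)) ?_
  rw [← Finset.sum_add_distrib]
  exact Finset.sum_congr rfl fun i hi => tsub_add_cancel_of_le (hgf i hi)

theorem ENNReal.div_mul_cancel_of_le {x a : ℝ≥0∞} (hxa : x ≤ a) (ha : a ≠ ∞) : x / a * a = x :=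
  ENNReal.div_mul_cancel' (fun h => le_antisymm (h ▸ hxa) bot_le) (fun h => absurd h ha)

theorem ENNReal.le_of_sum_eq {s : Finset ι} {g : ι → ℝ≥0∞} {a : ℝ≥0∞} (h : ∑ i ∈ s, g i = a) {i : ι}
    (hi : i ∈ s) : g i ≤ a :=
  (Finset.single_le_sum (fun _ _ => zero_le) hi).trans_eq h

theorem ENNReal.div_div_mul_mul_cancel {g a b : ℝ≥0∞} (hga : g ≤ a) (hgb : g ≤ b) (ha : a ≠ ∞)
    (hb : b ≠ ∞) : g / a / b * (a * b) = g := by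
  rw [mul_comm a, ← mul_assoc, ENNReal.div_mul_cancel' (fun h => ?_) (fun h => absurd h hb),
    ENNReal.div_mul_cancel_of_le hga ha]
  rw [nonpos_iff_eq_zero.mp (hgb.trans_eq h), ENNReal.zero_div]

theorem ENNReal.sum_div_div_mul_mul_cancel {s : Finset ι} {g b : ι → ℝ≥0∞} {a x : ℝ≥0∞}
    (hgb : ∀ j ∈ s, g j ≤ b j) (hb : ∀ j ∈ s, b j ≠ ∞) (hsum : ∑ j ∈ s, g j = a) (hxa : x ≤ a)
    (ha : a ≠ ∞) : ∑ j ∈ s, g j / a / b j * (x * b j) = x := by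
  have hterm : ∀ j ∈ s, g j / a / b j * (x * b j) = g j * a⁻¹ * x := fun j hj => by
    rw [mul_comm x, ← mul_assoc,
      ENNReal.div_mul_cancel' (fun h => ?_) (fun h => absurd h (hb j hj)), div_eq_mul_inv]
    rw [nonpos_iff_eq_zero.mp ((hgb j hj).trans_eq h), ENNReal.zero_div]
  rw [Finset.sum_congr rfl hterm, ← Finset.sum_mul, ← Finset.sum_mul, hsum,
    show a * a⁻¹ * x = x / a * a by rw [div_eq_mul_inv]; ring, ENNReal.div_mul_cancel_of_le hxa ha]

end ENNRealSums

section Completion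

variable {ι κ : Type*} [Fintype ι] [Fintype κ]

/-- The sub-plan `c` of the marginals `a`, `b`, completed to exact marginals by coupling its row
and column defects independently. -/
def completePlan (c : ι → κ → ℝ≥0∞) (a : ι → ℝ≥0∞) (b : κ → ℝ≥0∞) (i : ι) (j : κ) : ℝ≥0∞ :=
  c i j + (a i - ∑ j', c i j') * (b j - ∑ i', c i' j) / (1 - ∑ i', ∑ j', c i' j')

theorem completePlan_transpose (c : ι → κ → ℝ≥0∞) (a : ι → ℝ≥0∞) (b : κ → ℝ≥0∞) (i : ι)
    (j : κ) : completePlan (fun j i => c i j) b a j i = completePlan c a b i j := by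
  rw [completePlan, completePlan, Finset.sum_comm (f := fun j' i' => c i' j'), mul_comm]

variable {c : ι → κ → ℝ≥0∞} {a : ι → ℝ≥0∞} {b : κ → ℝ≥0∞}

theorem sum_tsub_row_sums (ha : ∑ i, a i = 1) (hrow : ∀ i, ∑ j, c i j ≤ a i) :
    ∑ i, (a i - ∑ j, c i j) = 1 - ∑ i, ∑ j, c i j := by
  rw [ENNReal.sum_tsub_of_le (fun i _ => hrow i) (by simp [ha]), ha]

theorem sum_completePlan_right (ha : ∑ i, a i = 1) (hb : ∑ j, b j = 1)
    (hrow : ∀ i, ∑ j, c i j ≤ a i) (hcol : ∀ j, ∑ i, c i j ≤ b j) (i : ι) :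
    ∑ j, completePlan c a b i j = a i := by
  have hdefect : ∑ j, (b j - ∑ i', c i' j) = 1 - ∑ i', ∑ j, c i' j := by
    rw [sum_tsub_row_sums (c := fun j i => c i j) hb hcol, Finset.sum_comm]
  have hzero : 1 - ∑ i', ∑ j, c i' j = 0 → a i - ∑ j, c i j = 0 := fun h =>
    le_antisymm ((Finset.single_le_sum (f := fun i' => a i' - ∑ j, c i' j) (fun i' _ => zero_le)
      (Finset.mem_univ i)).trans ((sum_tsub_row_sums ha hrow).trans_le h.le)) bot_le
  simp only [completePlan, Finset.sum_add_distrib, div_eq_mul_inv, ← Finset.sum_mul,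
    ← Finset.mul_sum, hdefect]
  rw [mul_right_comm, ← div_eq_mul_inv, ENNReal.div_mul_cancel' hzero
    (fun h => absurd h (ne_top_of_le_ne_top one_ne_top tsub_le_self)),
    add_tsub_cancel_of_le (hrow i)]

theorem sum_completePlan_left (ha : ∑ i, a i = 1) (hb : ∑ j, b j = 1)
    (hrow : ∀ i, ∑ j, c i j ≤ a i) (hcol : ∀ j, ∑ i, c i j ≤ b j) (j : κ) :
    ∑ i, completePlan c a b i j = b j := by
  simp_rw [← completePlan_transpose c a b]
  exact sum_completePlan_right (c := fun j i => c i j) hb ha hcol hrow j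

theorem sum_completePlan_mul_le (ha : ∑ i, a i = 1) (hb : ∑ j, b j = 1)
    (hrow : ∀ i, ∑ j, c i j ≤ a i) (hcol : ∀ j, ∑ i, c i j ≤ b j) {C : ι → κ → ℝ≥0∞}
    {M : ℝ≥0∞} (hCM : ∀ i j, C i j ≤ M) :
    ∑ i, ∑ j, completePlan c a b i j * C i j ≤
      ∑ i, ∑ j, c i j * C i j + (1 - ∑ i, ∑ j, c i j) * M := by
  set S := ∑ i, ∑ j, c i j
  have hdefect_col : ∑ j, (b j - ∑ i, c i j) = 1 - S := by
    rw [sum_tsub_row_sums (c := fun j i => c i j) hb hcol, Finset.sum_comm]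
  calc ∑ i, ∑ j, completePlan c a b i j * C i j
      ≤ ∑ i, ∑ j, (c i j * C i j +
          (a i - ∑ j', c i j') * (b j - ∑ i', c i' j) * (1 - S)⁻¹ * M) := by
        gcongr with i _ j _
        rw [completePlan, add_mul, div_eq_mul_inv]
        gcongr
        exact hCM i j
    _ = ∑ i, ∑ j, c i j * C i j + (∑ i, (a i - ∑ j', c i j')) *
          (∑ j, (b j - ∑ i', c i' j)) * (1 - S)⁻¹ * M := by
        rw [Finset.sum_mul_sum, Finset.sum_mul, Finset.sum_mul, ← Finset.sum_add_distrib]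
        refine Finset.sum_congr rfl fun i _ => ?_
        rw [Finset.sum_mul, Finset.sum_mul, ← Finset.sum_add_distrib]
    _ ≤ ∑ i, ∑ j, c i j * C i j + (1 - S) * M := by
        rw [sum_tsub_row_sums ha hrow, hdefect_col, ← div_eq_mul_inv, mul_div_assoc]
        gcongr
        exact mul_le_of_le_one_right zero_le ENNReal.div_self_le_one

end Completion

section CellCoupling

variable {X Y ι κ : Type*} [MeasurableSpace X] [MeasurableSpace Y] [Fintype ι] [Fintype κ]
  {f : X → ι} {f' : Y → κ}

variable (f f') in
def cellCoupling (g : ι → κ → ℝ≥0∞) (q : Measure X) (q' : Measure Y) : Measure (X × Y) :=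
  ∑ i, ∑ j, (g i j / q (f ⁻¹' {i}) / q' (f' ⁻¹' {j})) •
    (q.restrict (f ⁻¹' {i})).prod (q'.restrict (f' ⁻¹' {j}))

variable {g : ι → κ → ℝ≥0∞} {q : Measure X} {q' : Measure Y}

theorem cellCoupling_apply [SFinite q] [SFinite q']
    {s : Set (X × Y)} (hs : MeasurableSet s) :
    cellCoupling f f' g q q' s = ∑ i, ∑ j, g i j / q (f ⁻¹' {i}) / q' (f' ⁻¹' {j}) *
      (q.prod q') (s ∩ (f ⁻¹' {i}) ×ˢ (f' ⁻¹' {j})) := by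
  simp only [cellCoupling, Measure.coe_finsetSum, Finset.sum_apply, Measure.smul_apply,
    smul_eq_mul, Measure.prod_restrict, Measure.restrict_apply hs]

theorem cellCoupling_apply_prod [SFinite q] [SFinite q'] {T : Set X} {S : Set Y}
    (hT : MeasurableSet T) (hS : MeasurableSet S) :
    cellCoupling f f' g q q' (T ×ˢ S) = ∑ i, ∑ j, g i j / q (f ⁻¹' {i}) / q' (f' ⁻¹' {j}) *
      (q (T ∩ f ⁻¹' {i}) * q' (S ∩ f' ⁻¹' {j})) := by
  simp only [cellCoupling, Measure.coe_finsetSum, Finset.sum_apply, Measure.smul_apply,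
    smul_eq_mul, Measure.prod_prod, Measure.restrict_apply hT, Measure.restrict_apply hS]

theorem sum_measure_inter_preimage_singleton (hf : ∀ i, MeasurableSet (f ⁻¹' {i}))
    (q : Measure X) (T : Set X) : ∑ i, q (T ∩ f ⁻¹' {i}) = q T := by
  have h := sum_measure_preimage_singleton (μ := q.restrict T) Finset.univ fun i _ => hf i
  simp only [Finset.coe_univ, preimage_univ, Measure.restrict_apply_univ] at h
  rw [← h]
  exact Finset.sum_congr rfl fun i _ => by rw [Measure.restrict_apply (hf i), inter_comm]

theorem sum_measure_prod_preimage_singleton (hf' : ∀ j, MeasurableSet (f' ⁻¹' {j}))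
    {π : Measure (X × Y)} {q : Measure X} (hπ : π.map Prod.fst = q) {T : Set X}
    (hT : MeasurableSet T) : ∑ j, π (T ×ˢ (f' ⁻¹' {j})) = q T := by
  rw [← hπ, Measure.map_apply measurable_fst hT, ← sum_measure_inter_preimage_singleton
    (f := f' ∘ Prod.snd) (fun j => measurable_snd (hf' j)) π]
  rfl

theorem sum_measure_preimage_singleton_prod (hf : ∀ i, MeasurableSet (f ⁻¹' {i}))
    {π : Measure (X × Y)} {q' : Measure Y} (hπ : π.map Prod.snd = q') {S : Set Y}
    (hS : MeasurableSet S) : ∑ i, π ((f ⁻¹' {i}) ×ˢ S) = q' S := by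
  rw [← hπ, Measure.map_apply measurable_snd hS, ← sum_measure_inter_preimage_singleton
    (f := f ∘ Prod.fst) (fun i => measurable_fst (hf i)) π]
  exact Finset.sum_congr rfl fun i _ => by rw [inter_comm]; rfl

theorem lintegral_comp_cells (hf : ∀ i, MeasurableSet (f ⁻¹' {i}))
    (hf' : ∀ j, MeasurableSet (f' ⁻¹' {j})) (π : Measure (X × Y)) (C : ι → κ → ℝ≥0∞) :
    ∫⁻ p, C (f p.1) (f' p.2) ∂π = ∑ i, ∑ j, C i j * π ((f ⁻¹' {i}) ×ˢ (f' ⁻¹' {j})) := by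
  classical
  have hcell : ∀ p : X × Y, C (f p.1) (f' p.2) =
      ∑ i, ∑ j, ((f ⁻¹' {i}) ×ˢ (f' ⁻¹' {j})).indicator (fun _ => C i j) p := by
    intro p
    simp [indicator, ite_and, eq_comm]
  simp_rw [hcell]
  rw [lintegral_finsetSum _ fun i _ => Finset.measurable_sum _ fun j _ =>
    measurable_const.indicator ((hf i).prod (hf' j))]
  refine Finset.sum_congr rfl fun i _ => ?_
  rw [lintegral_finsetSum _ fun j _ => measurable_const.indicator ((hf i).prod (hf' j))]
  exact Finset.sum_congr rfl fun j _ => lintegral_indicator_const ((hf i).prod (hf' j)) _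

theorem measurable_cellCoupling_probKernel (hf : ∀ i, MeasurableSet (f ⁻¹' {i}))
    (hf' : ∀ j, MeasurableSet (f' ⁻¹' {j}))
    {g : Measure X × Measure Y → ι → κ → ℝ≥0∞} (hg : ∀ i j, Measurable fun qq => g qq i j) :
    Measurable fun qq : Measure X × Measure Y =>
      cellCoupling f f' (g qq) (probKernel X qq.1) (probKernel Y qq.2) := by
  let κ₂ :=
    (probKernel X).comap Prod.fst measurable_fst ×ₖ (probKernel Y).comap Prod.snd measurable_snd
  have hκ₂ : ∀ qq : Measure X × Measure Y, κ₂ qq = (probKernel X qq.1).prod (probKernel Y qq.2) :=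
    fun qq => by rw [Kernel.prod_apply, Kernel.comap_apply, Kernel.comap_apply]
  have hcell : ∀ (μ : Kernel (Measure X) X) (i : ι), Measurable fun q => μ q (f ⁻¹' {i}) :=
    fun μ i => μ.measurable_coe (hf i)
  refine Measure.measurable_of_measurable_coe _ fun s hs => ?_
  simp_rw [cellCoupling_apply hs, ← hκ₂]
  refine Finset.measurable_sum _ fun i _ => Finset.measurable_sum _ fun j _ => ?_
  exact (((hg i j).div ((hcell _ i).comp measurable_fst)).div
    ((probKernel Y).measurable_coe (hf' j) |>.comp measurable_snd)).mul
    (κ₂.measurable_coe (hs.inter ((hf i).prod (hf' j))))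

variable [IsFiniteMeasure q] [IsFiniteMeasure q']

theorem map_fst_cellCoupling (hf : ∀ i, MeasurableSet (f ⁻¹' {i}))
    (hrow : ∀ i, ∑ j, g i j = q (f ⁻¹' {i}))
    (hcol : ∀ j, ∑ i, g i j = q' (f' ⁻¹' {j})) :
    (cellCoupling f f' g q q').map Prod.fst = q := by
  ext T hT
  rw [Measure.map_apply measurable_fst hT, ← prod_univ,
    cellCoupling_apply_prod hT MeasurableSet.univ, ← sum_measure_inter_preimage_singleton hf q T]
  simp only [univ_inter]
  exact Finset.sum_congr rfl fun i _ => ENNReal.sum_div_div_mul_mul_cancel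
    (fun j _ => ENNReal.le_of_sum_eq (hcol j) (Finset.mem_univ i)) (fun _ _ => measure_ne_top _ _)
    (hrow i) (measure_mono inter_subset_right) (measure_ne_top _ _)

theorem map_snd_cellCoupling (hf' : ∀ j, MeasurableSet (f' ⁻¹' {j}))
    (hrow : ∀ i, ∑ j, g i j = q (f ⁻¹' {i}))
    (hcol : ∀ j, ∑ i, g i j = q' (f' ⁻¹' {j})) :
    (cellCoupling f f' g q q').map Prod.snd = q' := by
  ext S hS
  rw [Measure.map_apply measurable_snd hS, ← univ_prod,
    cellCoupling_apply_prod MeasurableSet.univ hS, ← sum_measure_inter_preimage_singleton hf' q' S,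
    Finset.sum_comm]
  simp only [univ_inter]
  refine Finset.sum_congr rfl fun j _ => ?_
  simp_rw [show ∀ i, g i j / q (f ⁻¹' {i}) / q' (f' ⁻¹' {j}) *
      (q (f ⁻¹' {i}) * q' (S ∩ f' ⁻¹' {j})) = g i j / q' (f' ⁻¹' {j}) / q (f ⁻¹' {i}) *
      (q' (S ∩ f' ⁻¹' {j}) * q (f ⁻¹' {i})) from fun i => by simp only [div_eq_mul_inv]; ring]
  exact ENNReal.sum_div_div_mul_mul_cancel
    (fun i _ => ENNReal.le_of_sum_eq (hrow i) (Finset.mem_univ j)) (fun _ _ => measure_ne_top _ _)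
    (hcol j) (measure_mono inter_subset_right) (measure_ne_top _ _)

theorem lintegral_cellCoupling_le (hf : ∀ i, MeasurableSet (f ⁻¹' {i}))
    (hf' : ∀ j, MeasurableSet (f' ⁻¹' {j}))
    (hrow : ∀ i, ∑ j, g i j = q (f ⁻¹' {i})) (hcol : ∀ j, ∑ i, g i j = q' (f' ⁻¹' {j}))
    {h : X × Y → ℝ≥0∞} {C : ι → κ → ℝ≥0∞} (hC : ∀ x y, h (x, y) ≤ C (f x) (f' y)) :
    ∫⁻ p, h p ∂(cellCoupling f f' g q q') ≤ ∑ i, ∑ j, g i j * C i j := by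
  simp only [cellCoupling, lintegral_finsetSum_measure, lintegral_smul_measure]
  gcongr with i _ j _
  have hcell : MeasurableSet ((f ⁻¹' {i}) ×ˢ (f' ⁻¹' {j})) := (hf i).prod (hf' j)
  calc g i j / q (f ⁻¹' {i}) / q' (f' ⁻¹' {j}) *
        ∫⁻ p, h p ∂(q.restrict (f ⁻¹' {i})).prod (q'.restrict (f' ⁻¹' {j}))
      ≤ g i j / q (f ⁻¹' {i}) / q' (f' ⁻¹' {j}) *
        (C i j * (q (f ⁻¹' {i}) * q' (f' ⁻¹' {j}))) := by
        rw [Measure.prod_restrict, ← Measure.prod_prod, ← setLIntegral_const]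
        refine mul_le_mul_right (setLIntegral_mono' hcell fun p hp => ?_) _
        rw [← hp.1, ← hp.2]
        exact hC p.1 p.2
    _ = g i j * C i j := by
        rw [mul_left_comm, ENNReal.div_div_mul_mul_cancel
          (ENNReal.le_of_sum_eq (hrow i) (Finset.mem_univ j))
          (ENNReal.le_of_sum_eq (hcol j) (Finset.mem_univ i))
          (measure_ne_top _ _) (measure_ne_top _ _), mul_comm]

end CellCoupling

section CellPartition

structure CellPartition (X : Type*) [PseudoMetricSpace X] [MeasurableSpace X] (δ : ℝ) where
  card : ℕ
  cell : X → Fin card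
  center : Fin card → X
  measurableSet_cell (i : Fin card) : MeasurableSet (cell ⁻¹' {i})
  dist_center_lt (x : X) : dist x (center (cell x)) < δ

variable {X : Type*} [PseudoMetricSpace X] [MeasurableSpace X] [OpensMeasurableSpace X]

theorem CellPartition.nonempty [CompactSpace X] {δ : ℝ} (hδ : 0 < δ) :
    Nonempty (CellPartition X δ) := by
  classical
  obtain ⟨t, -, ht, hcover⟩ := finite_cover_balls_of_compact (isCompact_univ (X := X)) hδ
  set K := ht.toFinset.card
  let z : Fin K → X := fun i => (ht.toFinset.equivFin.symm i).1
  have hex : ∀ x, ∃ n, ∃ h : n < K, x ∈ Metric.ball (z ⟨n, h⟩) δ := by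
    intro x
    obtain ⟨y, hy, hxy⟩ := mem_iUnion₂.mp (hcover (mem_univ x))
    obtain ⟨i, hi⟩ := ht.toFinset.equivFin.symm.surjective ⟨y, ht.mem_toFinset.mpr hy⟩
    exact ⟨i, i.2, by simpa [z, hi] using hxy⟩
  have hfind : Measurable fun x => Nat.find (hex x) := by
    refine measurable_find hex fun n => ?_
    by_cases hn : n < K
    · convert (Metric.isOpen_ball (x := z ⟨n, hn⟩) (ε := δ)).measurableSet using 1
      ext x
      simp [hn]
    · simp [hn]
  refine ⟨⟨K, fun x => ⟨Nat.find (hex x), (Nat.find_spec (hex x)).1⟩, z, fun i => ?_,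
    fun x => (Nat.find_spec (hex x)).2⟩⟩
  convert hfind (measurableSet_singleton i.val) using 1
  ext x
  simp [Fin.ext_iff]

def mesh (n : ℕ) : ℝ := 1 / (n + 1)

theorem mesh_pos (n : ℕ) : 0 < mesh n := Nat.one_div_pos_of_nat

theorem mesh_le_one (n : ℕ) : mesh n ≤ 1 :=
  div_le_one_of_le₀ (by linarith [n.cast_nonneg (α := ℝ)]) (by positivity)

variable (X) in
def cellPartition [CompactSpace X] (n : ℕ) : CellPartition X (mesh n) :=
  Classical.choice (CellPartition.nonempty (mesh_pos n))

end CellPartition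

section Plan

variable {X : Type*} [PseudoMetricSpace X] [MeasurableSpace X] [OpensMeasurableSpace X]
  [CompactSpace X]

variable (X) in
/-- Rational weights make the plans countable, so that infima over plans are measurable. -/
def Plan : Type := Σ n : ℕ, Fin (cellPartition X n).card → Fin (cellPartition X n).card → ℚ

instance : Countable (Plan X) := by
  unfold Plan
  infer_instance

instance : Nonempty (Plan X) := ⟨⟨0, 0⟩⟩

namespace Plan

variable (c : Plan X)

abbrev cells : CellPartition X (mesh c.1) := cellPartition X c.1

def weight (i j : Fin c.cells.card) : ℝ≥0∞ := ENNReal.ofReal (c.2 i j)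

def mass (q : Measure X) (i : Fin c.cells.card) : ℝ≥0∞ := q (c.cells.cell ⁻¹' {i})

def IsAdmissible (q q' : Measure X) : Prop :=
  q univ = 1 ∧ q' univ = 1 ∧ (∀ i, ∑ j, c.weight i j ≤ c.mass q i) ∧
    ∀ j, ∑ i, c.weight i j ≤ c.mass q' j

def centerCost (i j : Fin c.cells.card) : ℝ≥0∞ :=
  ENNReal.ofReal ((dist (c.cells.center i) (c.cells.center j) + 2 * mesh c.1) ^ 2)

def costBound : ℝ≥0∞ :=
  ∑ i, ∑ j, c.weight i j * c.centerCost i j +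
    (1 - ∑ i, ∑ j, c.weight i j) * ENNReal.ofReal ((Metric.diam (univ : Set X) + 2 * mesh c.1) ^ 2)

def coupling (q q' : Measure X) : Measure (X × X) :=
  cellCoupling c.cells.cell c.cells.cell (completePlan c.weight (c.mass q) (c.mass q')) q q'

open Classical in
def cost (qq : Measure X × Measure X) : ℝ≥0∞ :=
  if c.IsAdmissible qq.1 qq.2 then c.costBound else ∞

theorem sum_mass (q : Measure X) : ∑ i, c.mass q i = q univ := by
  simpa [mass] using sum_measure_inter_preimage_singleton c.cells.measurableSet_cell q univ

theorem centerCost_le_diam (i j : Fin c.cells.card) :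
    c.centerCost i j ≤ ENNReal.ofReal ((Metric.diam (univ : Set X) + 2 * mesh c.1) ^ 2) := by
  have := Metric.dist_le_diam_of_mem isCompact_univ.isBounded (mem_univ (c.cells.center i))
    (mem_univ (c.cells.center j))
  have := mesh_pos c.1
  unfold centerCost
  gcongr

theorem ofReal_dist_sq_le_centerCost (x y : X) :
    ENNReal.ofReal (dist x y ^ 2) ≤ c.centerCost (c.cells.cell x) (c.cells.cell y) := by
  have hx := c.cells.dist_center_lt x
  have hy := c.cells.dist_center_lt y
  have := dist_triangle4 x (c.cells.center (c.cells.cell x)) (c.cells.center (c.cells.cell y)) y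
  unfold centerCost
  gcongr
  rw [dist_comm] at hy
  linarith

theorem centerCost_le_dist_sq_add (x y : X) :
    c.centerCost (c.cells.cell x) (c.cells.cell y) ≤ ENNReal.ofReal (dist x y ^ 2) +
      ENNReal.ofReal (mesh c.1 * (8 * Metric.diam (univ : Set X) + 16)) := by
  have hx := c.cells.dist_center_lt x
  have hy := c.cells.dist_center_lt y
  have := dist_triangle4 (c.cells.center (c.cells.cell x)) x y (c.cells.center (c.cells.cell y))
  have hD := Metric.dist_le_diam_of_mem isCompact_univ.isBounded (mem_univ x) (mem_univ y)
  have hδ := mesh_pos c.1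
  have hδ₁ := mesh_le_one c.1
  rw [← ENNReal.ofReal_add (by positivity) (by nlinarith [dist_nonneg (x := x) (y := y)])]
  refine ENNReal.ofReal_le_ofReal ?_
  rw [dist_comm] at hx
  nlinarith [dist_nonneg (x := x) (y := y),
    dist_nonneg (x := c.cells.center (c.cells.cell x)) (y := c.cells.center (c.cells.cell y))]

variable {c} {q q' : Measure X}

theorem IsAdmissible.sum_completePlan_right (h : c.IsAdmissible q q') (i : Fin c.cells.card) :
    ∑ j, completePlan c.weight (c.mass q) (c.mass q') i j = c.mass q i :=
  _root_.sum_completePlan_right (by rw [sum_mass, h.1]) (by rw [sum_mass, h.2.1]) h.2.2.1 h.2.2.2 i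

theorem IsAdmissible.sum_completePlan_left (h : c.IsAdmissible q q') (j : Fin c.cells.card) :
    ∑ i, completePlan c.weight (c.mass q) (c.mass q') i j = c.mass q' j :=
  _root_.sum_completePlan_left (by rw [sum_mass, h.1]) (by rw [sum_mass, h.2.1]) h.2.2.1 h.2.2.2 j

theorem IsAdmissible.map_fst_coupling (h : c.IsAdmissible q q') :
    (c.coupling q q').map Prod.fst = q :=
  have : IsProbabilityMeasure q := ⟨h.1⟩
  have : IsProbabilityMeasure q' := ⟨h.2.1⟩
  map_fst_cellCoupling c.cells.measurableSet_cell h.sum_completePlan_right h.sum_completePlan_left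

theorem IsAdmissible.map_snd_coupling (h : c.IsAdmissible q q') :
    (c.coupling q q').map Prod.snd = q' :=
  have : IsProbabilityMeasure q := ⟨h.1⟩
  have : IsProbabilityMeasure q' := ⟨h.2.1⟩
  map_snd_cellCoupling c.cells.measurableSet_cell h.sum_completePlan_right h.sum_completePlan_left

theorem IsAdmissible.lintegral_coupling_le (h : c.IsAdmissible q q') :
    ∫⁻ p, ENNReal.ofReal (dist p.1 p.2 ^ 2) ∂(c.coupling q q') ≤ c.costBound := by
  have : IsProbabilityMeasure q := ⟨h.1⟩
  have : IsProbabilityMeasure q' := ⟨h.2.1⟩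
  exact (lintegral_cellCoupling_le c.cells.measurableSet_cell c.cells.measurableSet_cell
    h.sum_completePlan_right h.sum_completePlan_left c.ofReal_dist_sq_le_centerCost).trans
    (sum_completePlan_mul_le (by rw [sum_mass, h.1]) (by rw [sum_mass, h.2.1]) h.2.2.1 h.2.2.2
      c.centerCost_le_diam)

theorem cost_eq_costBound (h : c.IsAdmissible q q') : c.cost (q, q') = c.costBound :=
  if_pos h

theorem measurableSet_isAdmissible (c : Plan X) :
    MeasurableSet {qq : Measure X × Measure X | c.IsAdmissible qq.1 qq.2} := by
  have hmass : ∀ i, Measurable fun q : Measure X => c.mass q i := fun i =>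
    Measure.measurable_coe (c.cells.measurableSet_cell i)
  have huniv : Measurable fun q : Measure X => q univ := Measure.measurable_coe MeasurableSet.univ
  simp only [IsAdmissible, ofPred_and, ofPred_forall]
  exact ((huniv.comp measurable_fst) (measurableSet_singleton 1)).inter
    (((huniv.comp measurable_snd) (measurableSet_singleton 1)).inter
      ((MeasurableSet.iInter fun i => measurableSet_le measurable_const
        ((hmass i).comp measurable_fst)).inter
      (MeasurableSet.iInter fun j => measurableSet_le measurable_const
        ((hmass j).comp measurable_snd))))

theorem measurable_cost (c : Plan X) : Measurable c.cost :=
  Measurable.ite c.measurableSet_isAdmissible measurable_const measurable_const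

end Plan

variable (X) in
def infPlanCost (qq : Measure X × Measure X) : ℝ≥0∞ := ⨅ c : Plan X, c.cost qq

theorem measurable_infPlanCost : Measurable (infPlanCost X) :=
  Measurable.iInf fun c => c.measurable_cost

end Plan

section PlanApprox

variable {X : Type*} [PseudoMetricSpace X] [MeasurableSpace X] [OpensMeasurableSpace X]
  [CompactSpace X] {q q' : Measure X}

theorem ENNReal.exists_rat_ofReal_le_le_add {m η : ℝ≥0∞} (hm : m ≠ ∞) (hη : η ≠ 0) :
    ∃ r : ℚ, ENNReal.ofReal r ≤ m ∧ m ≤ ENNReal.ofReal r + η := by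
  rcases eq_or_ne m 0 with rfl | hm₀
  · exact ⟨0, by simp, zero_le⟩
  obtain ⟨r, -, hr₁, hr₂⟩ := ENNReal.lt_iff_exists_rat_btwn.mp (ENNReal.sub_lt_self hm hm₀ hη)
  exact ⟨r, hr₂.le, tsub_le_iff_right.mp hr₁.le⟩

namespace Plan

variable {π : Measure (X × X)} [IsProbabilityMeasure π] (c : Plan X)

theorem sum_weight_mul_centerCost_le
    (hw : ∀ i j, c.weight i j ≤ π ((c.cells.cell ⁻¹' {i}) ×ˢ (c.cells.cell ⁻¹' {j}))) :
    ∑ i, ∑ j, c.weight i j * c.centerCost i j ≤ ∫⁻ p, ENNReal.ofReal (dist p.1 p.2 ^ 2) ∂π +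
      ENNReal.ofReal (mesh c.1 * (8 * Metric.diam (univ : Set X) + 16)) :=
  calc ∑ i, ∑ j, c.weight i j * c.centerCost i j
      ≤ ∑ i, ∑ j, c.centerCost i j * π ((c.cells.cell ⁻¹' {i}) ×ˢ (c.cells.cell ⁻¹' {j})) := by
        refine Finset.sum_le_sum fun i _ => Finset.sum_le_sum fun j _ => ?_
        rw [mul_comm]
        exact mul_le_mul_right (hw i j) _
    _ = ∫⁻ p, c.centerCost (c.cells.cell p.1) (c.cells.cell p.2) ∂π :=
        (lintegral_comp_cells c.cells.measurableSet_cell c.cells.measurableSet_cell π _).symm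
    _ ≤ ∫⁻ p, (ENNReal.ofReal (dist p.1 p.2 ^ 2) +
          ENNReal.ofReal (mesh c.1 * (8 * Metric.diam (univ : Set X) + 16))) ∂π :=
        lintegral_mono fun p => c.centerCost_le_dist_sq_add p.1 p.2
    _ = _ := by rw [lintegral_add_right _ measurable_const, lintegral_const, measure_univ, mul_one]

theorem one_sub_sum_weight_le {τ : ℝ≥0∞}
    (hw : ∀ i j, π ((c.cells.cell ⁻¹' {i}) ×ˢ (c.cells.cell ⁻¹' {j})) ≤ c.weight i j + τ) :
    1 - ∑ i, ∑ j, c.weight i j ≤ c.cells.card * c.cells.card * τ := by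
  rw [tsub_le_iff_right]
  calc (1 : ℝ≥0∞) = ∑ i, ∑ j, π ((c.cells.cell ⁻¹' {i}) ×ˢ (c.cells.cell ⁻¹' {j})) := by
        simpa using lintegral_comp_cells c.cells.measurableSet_cell c.cells.measurableSet_cell π
          fun _ _ => 1
    _ ≤ ∑ i, ∑ j, (c.weight i j + τ) := by
        gcongr with i _ j _
        exact hw i j
    _ = c.cells.card * c.cells.card * τ + ∑ i, ∑ j, c.weight i j := by
        simp only [Finset.sum_add_distrib, Finset.sum_const, Finset.card_univ, Fintype.card_fin,
          nsmul_eq_mul]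
        ring

/-- Rounding the cell masses of a coupling down to rationals gives an admissible plan. -/
theorem exists_isAdmissible_costBound_le [IsProbabilityMeasure q] [IsProbabilityMeasure q']
    (h₁ : π.map Prod.fst = q) (h₂ : π.map Prod.snd = q') (n : ℕ) {η : ℝ≥0∞} (hη : η ≠ 0) :
    ∃ c : Plan X, c.IsAdmissible q q' ∧
      c.costBound ≤ ∫⁻ p, ENNReal.ofReal (dist p.1 p.2 ^ 2) ∂π +
        ENNReal.ofReal (mesh n * (8 * Metric.diam (univ : Set X) + 16)) + η := by
  set P := cellPartition X n
  set L := ENNReal.ofReal ((Metric.diam (univ : Set X) + 2 * mesh n) ^ 2)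
  set τ := η / (P.card * P.card * L)
  have hτ : τ ≠ 0 := by
    simp only [τ, ne_eq, ENNReal.div_eq_zero_iff, hη, false_or]
    exact ENNReal.mul_ne_top (ENNReal.mul_ne_top (by simp) (by simp)) ENNReal.ofReal_ne_top
  choose w hw₁ hw₂ using fun i j => ENNReal.exists_rat_ofReal_le_le_add
    (m := π ((P.cell ⁻¹' {i}) ×ˢ (P.cell ⁻¹' {j}))) (measure_ne_top π _) hτ
  let c : Plan X := ⟨n, w⟩
  refine ⟨c, ⟨measure_univ, measure_univ, fun i => ?_, fun j => ?_⟩, ?_⟩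
  · exact (Finset.sum_le_sum fun j _ => hw₁ i j).trans_eq
      (sum_measure_prod_preimage_singleton P.measurableSet_cell h₁ (P.measurableSet_cell i))
  · exact (Finset.sum_le_sum fun i _ => hw₁ i j).trans_eq
      (sum_measure_preimage_singleton_prod P.measurableSet_cell h₂ (P.measurableSet_cell j))
  calc c.costBound ≤ (∫⁻ p, ENNReal.ofReal (dist p.1 p.2 ^ 2) ∂π +
        ENNReal.ofReal (mesh n * (8 * Metric.diam (univ : Set X) + 16))) +
          P.card * P.card * τ * L :=
        add_le_add (c.sum_weight_mul_centerCost_le hw₁)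
          (by gcongr; exact c.one_sub_sum_weight_le hw₂)
    _ ≤ _ := by
        gcongr
        calc (P.card : ℝ≥0∞) * P.card * τ * L = P.card * P.card * L * τ := by ring
          _ ≤ η := ENNReal.mul_div_le

end Plan

theorem infPlanCost_le_lintegral [IsProbabilityMeasure q] [IsProbabilityMeasure q']
    {π : Measure (X × X)} (h₁ : π.map Prod.fst = q) (h₂ : π.map Prod.snd = q') :
    infPlanCost X (q, q') ≤ ∫⁻ p, ENNReal.ofReal (dist p.1 p.2 ^ 2) ∂π := by
  refine ENNReal.le_of_forall_pos_le_add fun ε hε _ => ?_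
  set D := Metric.diam (univ : Set X)
  have hD : 0 ≤ D := Metric.diam_nonneg
  have hε₂ : 0 < (ε : ℝ) / 2 := by positivity
  obtain ⟨n, hn⟩ := exists_nat_one_div_lt (div_pos hε₂ (by positivity : 0 < 8 * D + 16))
  have hmesh : mesh n * (8 * D + 16) ≤ ε / 2 := by
    rw [lt_div_iff₀ (by positivity)] at hn
    exact hn.le
  have : IsProbabilityMeasure π := isProbabilityMeasure_of_map_fst h₁
  obtain ⟨c, hc, hcost⟩ := Plan.exists_isAdmissible_costBound_le h₁ h₂ n
    (ENNReal.ofReal_pos.mpr hε₂).ne'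
  calc infPlanCost X (q, q') ≤ c.cost (q, q') := iInf_le _ c
    _ = c.costBound := Plan.cost_eq_costBound hc
    _ ≤ ∫⁻ p, ENNReal.ofReal (dist p.1 p.2 ^ 2) ∂π + ENNReal.ofReal (ε / 2) +
          ENNReal.ofReal (ε / 2) := hcost.trans (by gcongr)
    _ = ∫⁻ p, ENNReal.ofReal (dist p.1 p.2 ^ 2) ∂π + ε := by
        rw [add_assoc, ← ENNReal.ofReal_add hε₂.le hε₂.le, add_halves, ENNReal.ofReal_coe_nnreal]

theorem ofReal_W2sq_le_infPlanCost :
    ENNReal.ofReal (W2sq (fun x y : X => dist x y ^ 2) q q') ≤ infPlanCost X (q, q') := by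
  refine le_iInf fun c => ?_
  by_cases h : c.IsAdmissible q q'
  · rw [Plan.cost_eq_costBound h]
    exact (ofReal_W2sq_le_lintegral (fun _ _ => sq_nonneg _) (by fun_prop) h.map_fst_coupling
      h.map_snd_coupling).trans h.lintegral_coupling_le
  · simp [Plan.cost, h]

theorem integrable_dist_sq (π : Measure (X × X)) [IsFiniteMeasure π] :
    Integrable (fun p => dist p.1 p.2 ^ 2) π :=
  Integrable.of_bound (by fun_prop) (Metric.diam (univ : Set X) ^ 2) <| ae_of_all _ fun p => by
    rw [Real.norm_of_nonneg (sq_nonneg _)]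
    gcongr
    exact Metric.dist_le_diam_of_mem isCompact_univ.isBounded (mem_univ _) (mem_univ _)

theorem infPlanCost_eq_ofReal_W2sq [IsProbabilityMeasure q] [IsProbabilityMeasure q'] :
    infPlanCost X (q, q') = ENNReal.ofReal (W2sq (fun x y : X => dist x y ^ 2) q q') := by
  refine le_antisymm (le_ofReal_W2sq (fun _ _ => sq_nonneg _) fun π h₁ h₂ => ?_)
    ofReal_W2sq_le_infPlanCost
  have : IsProbabilityMeasure π := isProbabilityMeasure_of_map_fst h₁
  rw [ofReal_integral_eq_lintegral_ofReal (integrable_dist_sq π) (ae_of_all _ fun _ => sq_nonneg _)]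
  exact infPlanCost_le_lintegral h₁ h₂

theorem W2sq_dist_sq_le [IsProbabilityMeasure q] [IsProbabilityMeasure q'] :
    W2sq (fun x y : X => dist x y ^ 2) q q' ≤ Metric.diam (univ : Set X) ^ 2 := by
  refine (W2sq_le_integral (fun _ _ => sq_nonneg _) (π := q.prod q') (by simp) (by simp)).trans ?_
  refine (integral_mono (integrable_dist_sq _)
    (integrable_const (Metric.diam (univ : Set X) ^ 2)) fun p => ?_).trans_eq (by simp)
  dsimp only
  gcongr
  exact Metric.dist_le_diam_of_mem isCompact_univ.isBounded (mem_univ _) (mem_univ _)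

theorem W2_dist_sq_le_diam [IsProbabilityMeasure q] [IsProbabilityMeasure q'] :
    W2 (fun x y : X => dist x y ^ 2) q q' ≤ Metric.diam (univ : Set X) :=
  (Real.sqrt_le_sqrt W2sq_dist_sq_le).trans_eq (Real.sqrt_sq Metric.diam_nonneg)

theorem W2_dist_sq_eq_sqrt_infPlanCost [IsProbabilityMeasure q] [IsProbabilityMeasure q'] :
    W2 (fun x y : X => dist x y ^ 2) q q' = √(infPlanCost X (q, q')).toReal := by
  rw [W2, infPlanCost_eq_ofReal_W2sq, ENNReal.toReal_ofReal (W2sq_nonneg fun _ _ => sq_nonneg _)]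

end PlanApprox

section NearOptimalKernel

variable {X : Type*} [PseudoMetricSpace X] [MeasurableSpace X] [OpensMeasurableSpace X]
  [CompactSpace X]

namespace Plan

open Classical in
def admissibleCoupling (c : Plan X) (qq : Measure X × Measure X) : Measure (X × X) :=
  if c.IsAdmissible qq.1 qq.2 then c.coupling qq.1 qq.2 else 0

theorem measurable_admissibleCoupling (c : Plan X) : Measurable c.admissibleCoupling := by
  classical
  have hprob : c.admissibleCoupling = fun qq => if c.IsAdmissible qq.1 qq.2 then
      c.coupling (probKernel X qq.1) (probKernel X qq.2) else 0 := by
    ext1 qq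
    unfold admissibleCoupling
    split_ifs with h
    · have : IsProbabilityMeasure qq.1 := ⟨h.1⟩
      have : IsProbabilityMeasure qq.2 := ⟨h.2.1⟩
      rw [probKernel_apply, probKernel_apply]
    · rfl
  have hmass : ∀ (f : Measure X × Measure X → Measure X), Measurable f → ∀ i,
      Measurable fun qq => c.mass (probKernel X (f qq)) i := fun f hf i =>
    ((probKernel X).measurable_coe (c.cells.measurableSet_cell i)).comp hf
  rw [hprob]
  refine Measurable.ite c.measurableSet_isAdmissible
    (measurable_cellCoupling_probKernel c.cells.measurableSet_cell c.cells.measurableSet_cell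
      fun i j => ?_) measurable_const
  exact measurable_const.add ((((hmass _ measurable_fst i).sub measurable_const).mul
    ((hmass _ measurable_snd j).sub measurable_const)).div measurable_const)

theorem admissibleCoupling_apply_univ_le (c : Plan X) (qq : Measure X × Measure X) :
    c.admissibleCoupling qq univ ≤ 1 := by
  unfold admissibleCoupling
  split_ifs with h
  · refine le_of_eq ?_
    calc c.coupling qq.1 qq.2 univ = (c.coupling qq.1 qq.2).map Prod.fst univ := by
          rw [Measure.map_apply measurable_fst MeasurableSet.univ, preimage_univ]
      _ = 1 := by rw [h.map_fst_coupling, h.1]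
  · simp

variable (X) in
def enum : ℕ → Plan X := (exists_surjective_nat (Plan X)).choose

theorem enum_surjective : Function.Surjective (enum X) :=
  (exists_surjective_nat (Plan X)).choose_spec

end Plan

theorem exists_cost_lt_infPlanCost_add {ε : ℝ≥0∞} (hε : ε ≠ 0) (qq : Measure X × Measure X) :
    ∃ k, (Plan.enum X k).cost qq < infPlanCost X qq + ε ∨ infPlanCost X qq = ∞ := by
  rcases eq_or_ne (infPlanCost X qq) ∞ with h | h
  · exact ⟨0, Or.inr h⟩
  obtain ⟨c, hc⟩ := iInf_lt_iff.mp (ENNReal.lt_add_right h hε)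
  obtain ⟨k, rfl⟩ := Plan.enum_surjective c
  exact ⟨k, Or.inl hc⟩

variable (X) in
open Classical in
/-- Choosing the *first* plan within `ε` of the infimum keeps the choice measurable. -/
def nearOptimalKernel {ε : ℝ≥0∞} (hε : ε ≠ 0) : Kernel (Measure X × Measure X) (X × X) where
  toFun qq := (Plan.enum X (Nat.find (exists_cost_lt_infPlanCost_add hε qq))).admissibleCoupling qq
  measurable' := Measurable.find
    (p := fun k qq => (Plan.enum X k).cost qq < infPlanCost X qq + ε ∨ infPlanCost X qq = ∞)
    (fun k => (Plan.enum X k).measurable_admissibleCoupling)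
    (fun k => (measurableSet_lt (Plan.enum X k).measurable_cost
      (measurable_infPlanCost.add_const ε)).union
      (measurable_infPlanCost (measurableSet_singleton ∞)))
    (exists_cost_lt_infPlanCost_add hε)

variable {ε : ℝ≥0∞} (hε : ε ≠ 0) {q q' : Measure X}

instance : IsFiniteKernel (nearOptimalKernel X hε) :=
  ⟨⟨1, one_lt_top, fun qq => Plan.admissibleCoupling_apply_univ_le _ qq⟩⟩

theorem exists_nearOptimalKernel_eq_coupling [IsProbabilityMeasure q] [IsProbabilityMeasure q'] :
    ∃ c : Plan X, c.IsAdmissible q q' ∧ nearOptimalKernel X hε (q, q') = c.coupling q q' ∧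
      c.costBound ≤ ENNReal.ofReal (W2sq (fun x y : X => dist x y ^ 2) q q') + ε := by
  obtain ⟨k, hk, hκ⟩ : ∃ k, ((Plan.enum X k).cost (q, q') < infPlanCost X (q, q') + ε ∨
      infPlanCost X (q, q') = ∞) ∧
      nearOptimalKernel X hε (q, q') = (Plan.enum X k).admissibleCoupling (q, q') :=
    ⟨_, Nat.find_spec (exists_cost_lt_infPlanCost_add hε (q, q')), rfl⟩
  rw [infPlanCost_eq_ofReal_W2sq] at hk
  have hlt := hk.resolve_right ENNReal.ofReal_ne_top
  have hadm : (Plan.enum X k).IsAdmissible q q' := by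
    by_contra h
    simp [Plan.cost, h] at hlt
  refine ⟨_, hadm, hκ.trans (if_pos hadm), ?_⟩
  rw [← Plan.cost_eq_costBound hadm]
  exact hlt.le

theorem nearOptimalKernel_spec [IsProbabilityMeasure q] [IsProbabilityMeasure q'] :
    (nearOptimalKernel X hε (q, q')).map Prod.fst = q ∧
      (nearOptimalKernel X hε (q, q')).map Prod.snd = q' ∧
      ∫⁻ p, ENNReal.ofReal (dist p.1 p.2 ^ 2) ∂(nearOptimalKernel X hε (q, q')) ≤
        ENNReal.ofReal (W2 (fun x y : X => dist x y ^ 2) q q') ^ 2 + ε := by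
  obtain ⟨c, hc, hκ, hcost⟩ := exists_nearOptimalKernel_eq_coupling hε (q := q) (q' := q')
  rw [hκ, W2, ← ENNReal.ofReal_pow (Real.sqrt_nonneg _),
    Real.sq_sqrt (W2sq_nonneg fun _ _ => sq_nonneg _)]
  exact ⟨hc.map_fst_coupling, hc.map_snd_coupling, hc.lintegral_coupling_le.trans hcost⟩

end NearOptimalKernel

section Slices

variable {A X : Type*} [MeasurableSpace A] [MeasurableSpace X]

theorem measurableSet_isProbabilityMeasure :
    MeasurableSet {q : Measure X | IsProbabilityMeasure q} := by
  simp_rw [isProbabilityMeasure_iff]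
  exact Measure.measurable_coe MeasurableSet.univ (measurableSet_singleton 1)

variable (A X) in
/-- The kernel `y ↦ δ_{y.1} ⊗ y.2` of `Pext`, made measurable by `probKernel`. -/
def sliceKernel : Kernel (A × Measure X) (A × X) :=
  Kernel.deterministic Prod.fst measurable_fst ×ₖ (probKernel X).comap Prod.snd measurable_snd

theorem sliceKernel_apply (y : A × Measure X) {s : Set (A × X)} (hs : MeasurableSet s) :
    sliceKernel A X y s = probKernel X y.2 (Prod.mk y.1 ⁻¹' s) := by
  rw [sliceKernel, Kernel.prod_apply, Kernel.deterministic_apply, Kernel.comap_apply,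
    Measure.dirac_prod, Measure.map_apply measurable_prodMk_left hs]

end Slices

section Pext

variable {l : ℕ} {U : Set (EuclideanSpace ℝ (Fin l))} {ξ : Measure (ℝ × Measure U)}

theorem Pext_eq_bind_sliceKernel (hξ : ∀ᵐ y ∂ξ, IsProbabilityMeasure y.2) :
    Pext U ξ = ξ.bind (sliceKernel ℝ U) := by
  unfold Pext Measure.bind
  congr 1
  refine Measure.map_congr (hξ.mono fun y hy => ?_)
  ext s hs
  dsimp only
  rw [sliceKernel_apply y hs, probKernel_apply, Measure.dirac_prod,
    Measure.map_apply measurable_prodMk_left hs]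

theorem Pext_apply (hξ : ∀ᵐ y ∂ξ, IsProbabilityMeasure y.2) {s : Set (ℝ × U)}
    (hs : MeasurableSet s) : Pext U ξ s = ∫⁻ y, sliceKernel ℝ U y s ∂ξ := by
  rw [Pext_eq_bind_sliceKernel hξ, Measure.bind_apply hs (Kernel.aemeasurable _)]

theorem map_fst_Pext (hξ : ∀ᵐ y ∂ξ, IsProbabilityMeasure y.2) :
    (Pext U ξ).map Prod.fst = ξ.map Prod.fst := by
  ext s hs
  rw [Measure.map_apply measurable_fst hs, Measure.map_apply measurable_fst hs,
    Pext_apply hξ (measurable_fst hs), ← lintegral_indicator_one (measurable_fst hs)]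
  refine lintegral_congr_ae (hξ.mono fun y hy => ?_)
  dsimp only
  rw [sliceKernel_apply y (measurable_fst hs), probKernel_apply, preimage_preimage]
  by_cases h : y.1 ∈ s <;> simp [h, Set.indicator]

theorem isProbabilityMeasure_Pext [IsProbabilityMeasure ξ]
    (hξ : ∀ᵐ y ∂ξ, IsProbabilityMeasure y.2) : IsProbabilityMeasure (Pext U ξ) :=
  have : IsProbabilityMeasure ((Pext U ξ).map Prod.fst) := by
    rw [map_fst_Pext hξ]
    exact Measure.isProbabilityMeasure_map measurable_fst.aemeasurable
  Measure.isProbabilityMeasure_of_map Prod.fst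

theorem integrable_fst_sq_Pext (hξ : ∀ᵐ y ∂ξ, IsProbabilityMeasure y.2)
    (hint : Integrable (fun y => y.1 ^ 2) ξ) :
    Integrable (fun p : ℝ × U => p.1 ^ 2) (Pext U ξ) := by
  have hsq : ∀ μ : Measure ℝ, AEStronglyMeasurable (fun x : ℝ => x ^ 2) μ := fun _ => by fun_prop
  refine (integrable_map_measure (hsq _) measurable_fst.aemeasurable).mp ?_
  rw [map_fst_Pext hξ]
  exact (integrable_map_measure (hsq _) measurable_fst.aemeasurable).mpr hint

end Pext

section DistanceCost

variable {X : Type*} [PseudoMetricSpace X] [MeasurableSpace X] [OpensMeasurableSpace X]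
  [SecondCountableTopology X]

theorem lintegral_abs_add_dist_sq_le {γ : Measure (X × X)} [IsProbabilityMeasure γ]
    {w s : ℝ≥0∞} (hγ : ∫⁻ p, ENNReal.ofReal (dist p.1 p.2 ^ 2) ∂γ ≤ w ^ 2 + s ^ 2) (a : ℝ) :
    ∫⁻ p, ENNReal.ofReal ((|a| + dist p.1 p.2) ^ 2) ∂γ ≤ (ENNReal.ofReal |a| + w + s) ^ 2 :=
  calc ∫⁻ p, ENNReal.ofReal ((|a| + dist p.1 p.2) ^ 2) ∂γ
      = ∫⁻ p, (ENNReal.ofReal (dist p.1 p.2) + ENNReal.ofReal |a|) ^ 2 ∂γ := by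
        refine lintegral_congr fun p => ?_
        rw [← ENNReal.ofReal_add dist_nonneg (abs_nonneg _), ← ENNReal.ofReal_pow (by positivity),
          add_comm]
    _ ≤ _ := lintegral_add_const_sq_le (by fun_prop) <| by
        simpa only [← ENNReal.ofReal_pow dist_nonneg] using hγ

end DistanceCost

section PextCoupling

variable {l : ℕ} {U : Set (EuclideanSpace ℝ (Fin l))}

theorem map_compProd_eq_Pext {Z : Type*} [MeasurableSpace Z] {π : Measure Z} [SFinite π]
    {κ : Kernel Z (U × U)} [IsSFiniteKernel κ] {ρ : Z → ℝ × Measure U} (hρ : Measurable ρ)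
    {φ : U × U → U} (hφ : Measurable φ)
    (hκ : ∀ᵐ z ∂π, IsProbabilityMeasure (ρ z).2 ∧ (κ z).map φ = (ρ z).2) :
    (π ⊗ₘ κ).map (fun w => ((ρ w.1).1, φ w.2)) = Pext U (π.map ρ) := by
  have hΨ : Measurable fun w : Z × (U × U) => ((ρ w.1).1, φ w.2) :=
    (hρ.comp measurable_fst).fst.prodMk (hφ.comp measurable_snd)
  have hprob : ∀ᵐ y ∂(π.map ρ), IsProbabilityMeasure y.2 :=
    (ae_map_iff hρ.aemeasurable (measurable_snd measurableSet_isProbabilityMeasure)).mpr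
      (hκ.mono fun z hz => hz.1)
  ext s hs
  rw [Measure.map_apply hΨ hs, Measure.compProd_apply (hΨ hs), Pext_apply hprob hs,
    lintegral_map ((sliceKernel ℝ U).measurable_coe hs) hρ]
  refine lintegral_congr_ae (hκ.mono fun z hz => ?_)
  have := hz.1
  dsimp only
  rw [sliceKernel_apply _ hs, probKernel_apply, ← hz.2,
    Measure.map_apply hφ (measurable_prodMk_left hs)]
  rfl

variable {ξ ξ' : Measure (ℝ × Measure U)} {π : Measure ((ℝ × Measure U) × (ℝ × Measure U))}

theorem ae_isProbabilityMeasure_of_coupling (h₁ : π.map Prod.fst = ξ)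
    (h₂ : π.map Prod.snd = ξ') (hξ : ∀ᵐ y ∂ξ, IsProbabilityMeasure y.2)
    (hξ' : ∀ᵐ y ∂ξ', IsProbabilityMeasure y.2) :
    ∀ᵐ z ∂π, IsProbabilityMeasure z.1.2 ∧ IsProbabilityMeasure z.2.2 := by
  have hm : MeasurableSet {y : ℝ × Measure U | IsProbabilityMeasure y.2} :=
    measurable_snd measurableSet_isProbabilityMeasure
  filter_upwards [(ae_map_iff measurable_fst.aemeasurable hm).mp (h₁ ▸ hξ),
    (ae_map_iff measurable_snd.aemeasurable hm).mp (h₂ ▸ hξ')] with z hz₁ hz₂ using ⟨hz₁, hz₂⟩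

theorem exists_coupling_Pext_lintegral_le [CompactSpace U] [IsProbabilityMeasure π]
    (h₁ : π.map Prod.fst = ξ) (h₂ : π.map Prod.snd = ξ') (hξ : ∀ᵐ y ∂ξ, IsProbabilityMeasure y.2)
    (hξ' : ∀ᵐ y ∂ξ', IsProbabilityMeasure y.2) {s : ℝ≥0∞} (hs : s ≠ 0) :
    ∃ σ : Measure ((ℝ × U) × (ℝ × U)), σ.map Prod.fst = Pext U ξ ∧ σ.map Prod.snd = Pext U ξ' ∧
      ∫⁻ w, ENNReal.ofReal ((|w.1.1 - w.2.1| + dist w.1.2 w.2.2) ^ 2) ∂σ ≤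
        ∫⁻ z, (ENNReal.ofReal |z.1.1 - z.2.1| +
          ENNReal.ofReal (W2 (fun u v : U => dist u v ^ 2) z.1.2 z.2.2) + s) ^ 2 ∂π := by
  have hs2 : s ^ 2 ≠ 0 := pow_ne_zero 2 hs
  let κ := (nearOptimalKernel U hs2).comap
    (fun z : (ℝ × Measure U) × (ℝ × Measure U) => (z.1.2, z.2.2)) (by fun_prop)
  have hκ : ∀ᵐ z ∂π, IsProbabilityMeasure z.1.2 ∧ IsProbabilityMeasure z.2.2 ∧
      (κ z).map Prod.fst = z.1.2 ∧ (κ z).map Prod.snd = z.2.2 ∧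
      ∫⁻ uv, ENNReal.ofReal (dist uv.1 uv.2 ^ 2) ∂(κ z) ≤
        ENNReal.ofReal (W2 (fun u v : U => dist u v ^ 2) z.1.2 z.2.2) ^ 2 + s ^ 2 := by
    filter_upwards [ae_isProbabilityMeasure_of_coupling h₁ h₂ hξ hξ'] with z ⟨hz₁, hz₂⟩
    exact ⟨hz₁, hz₂, nearOptimalKernel_spec hs2⟩
  have hΦ : Measurable fun w : ((ℝ × Measure U) × (ℝ × Measure U)) × (U × U) =>
      ((w.1.1.1, w.2.1), (w.1.2.1, w.2.2)) := by fun_prop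
  refine ⟨(π ⊗ₘ κ).map fun w => ((w.1.1.1, w.2.1), (w.1.2.1, w.2.2)), ?_, ?_, ?_⟩
  · rw [Measure.map_map measurable_fst hΦ, ← h₁]
    exact map_compProd_eq_Pext measurable_fst measurable_fst
      (hκ.mono fun z hz => ⟨hz.1, hz.2.2.1⟩)
  · rw [Measure.map_map measurable_snd hΦ, ← h₂]
    exact map_compProd_eq_Pext measurable_snd measurable_snd
      (hκ.mono fun z hz => ⟨hz.2.1, hz.2.2.2.1⟩)
  rw [lintegral_map (by fun_prop) hΦ, Measure.lintegral_compProd (by fun_prop)]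
  refine lintegral_mono_ae (hκ.mono fun z hz => ?_)
  obtain ⟨hz₁, -, hzfst, -, hzcost⟩ := hz
  have : IsProbabilityMeasure ((κ z).map Prod.fst) := hzfst ▸ hz₁
  have : IsProbabilityMeasure (κ z) := Measure.isProbabilityMeasure_of_map Prod.fst
  exact lintegral_abs_add_dist_sq_le hzcost _

/-- Without this, the Bochner integral in `W2sq` on `ℝ × Measure U` would be the junk value `0`. -/
theorem aemeasurable_W2_dist_sq [CompactSpace U] (h₁ : π.map Prod.fst = ξ)
    (h₂ : π.map Prod.snd = ξ') (hξ : ∀ᵐ y ∂ξ, IsProbabilityMeasure y.2)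
    (hξ' : ∀ᵐ y ∂ξ', IsProbabilityMeasure y.2) :
    AEMeasurable (fun z => W2 (fun u v : U => dist u v ^ 2) z.1.2 z.2.2) π := by
  refine (measurable_infPlanCost.comp (measurable_fst.snd.prodMk measurable_snd.snd)
    |>.ennreal_toReal.sqrt).aemeasurable.congr ?_
  filter_upwards [ae_isProbabilityMeasure_of_coupling h₁ h₂ hξ hξ'] with z ⟨hz₁, hz₂⟩
  exact W2_dist_sq_eq_sqrt_infPlanCost.symm

theorem ofReal_W2sq_Pext_le_lintegral [CompactSpace U] [IsProbabilityMeasure π]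
    (h₁ : π.map Prod.fst = ξ) (h₂ : π.map Prod.snd = ξ') (hξ : ∀ᵐ y ∂ξ, IsProbabilityMeasure y.2)
    (hξ' : ∀ᵐ y ∂ξ', IsProbabilityMeasure y.2) :
    ENNReal.ofReal (W2sq (fun (p q : ℝ × U) => (|p.1 - q.1| + dist p.2 q.2) ^ 2)
        (Pext U ξ) (Pext U ξ')) ≤
      ∫⁻ z, ENNReal.ofReal
        ((|z.1.1 - z.2.1| + W2 (fun (u v : U) => dist u v ^ 2) z.1.2 z.2.2) ^ 2) ∂π := by
  have hW := aemeasurable_W2_dist_sq h₁ h₂ hξ hξ'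
  have hsplit : ∀ z : (ℝ × Measure U) × (ℝ × Measure U),
      ENNReal.ofReal ((|z.1.1 - z.2.1| + W2 (fun (u v : U) => dist u v ^ 2) z.1.2 z.2.2) ^ 2) =
        (ENNReal.ofReal |z.1.1 - z.2.1| +
          ENNReal.ofReal (W2 (fun (u v : U) => dist u v ^ 2) z.1.2 z.2.2)) ^ 2 := fun z => by
    rw [ENNReal.ofReal_pow (add_nonneg (abs_nonneg _) W2_nonneg),
      ENNReal.ofReal_add (abs_nonneg _) W2_nonneg]
  simp_rw [hsplit]
  rw [← ENNReal.rpow_le_rpow_iff (z := 2⁻¹) (by norm_num)]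
  refine ENNReal.le_of_forall_pos_le_add fun s hs _ => ?_
  obtain ⟨σ, hσ₁, hσ₂, hσ⟩ :=
    exists_coupling_Pext_lintegral_le h₁ h₂ hξ hξ' (s := s) (by exact_mod_cast hs.ne')
  calc _ ≤ (∫⁻ z, (ENNReal.ofReal |z.1.1 - z.2.1| +
          ENNReal.ofReal (W2 (fun u v : U => dist u v ^ 2) z.1.2 z.2.2) + s) ^ 2 ∂π) ^
            (2⁻¹ : ℝ) := by
        gcongr
        exact (ofReal_W2sq_le_lintegral (fun _ _ => sq_nonneg _) (by fun_prop) hσ₁ hσ₂).trans hσ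
    _ ≤ _ := lintegral_add_const_sq_rpow_le (by fun_prop) s

theorem integrable_abs_sub_add_W2_sq [CompactSpace U] [IsProbabilityMeasure π]
    (h₁ : π.map Prod.fst = ξ) (h₂ : π.map Prod.snd = ξ') (hξ : ∀ᵐ y ∂ξ, IsProbabilityMeasure y.2)
    (hξ' : ∀ᵐ y ∂ξ', IsProbabilityMeasure y.2) (hint : Integrable (fun y => y.1 ^ 2) ξ)
    (hint' : Integrable (fun y => y.1 ^ 2) ξ') :
    Integrable
      (fun z => (|z.1.1 - z.2.1| + W2 (fun (u v : U) => dist u v ^ 2) z.1.2 z.2.2) ^ 2) π := by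
  have hsq : ∀ ν : Measure (ℝ × Measure U), AEStronglyMeasurable (fun y => y.1 ^ 2) ν :=
    fun _ => by fun_prop
  have hint₁ : Integrable (fun z => z.1.1 ^ 2) π :=
    (integrable_map_measure (hsq _) measurable_fst.aemeasurable).mp (h₁ ▸ hint)
  have hint₂ : Integrable (fun z => z.2.1 ^ 2) π :=
    (integrable_map_measure (hsq _) measurable_snd.aemeasurable).mp (h₂ ▸ hint')
  set D := Metric.diam (univ : Set U)
  refine Integrable.mono' (((hint₁.const_mul 4).add (hint₂.const_mul 4)).add
    (integrable_const (2 * D ^ 2)))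
    ((((measurable_fst.fst.sub measurable_snd.fst).abs.aemeasurable.add
      (aemeasurable_W2_dist_sq h₁ h₂ hξ hξ')).pow_const 2).aestronglyMeasurable) ?_
  filter_upwards [ae_isProbabilityMeasure_of_coupling h₁ h₂ hξ hξ'] with z ⟨hz₁, hz₂⟩
  have hWD := W2_dist_sq_le_diam (q := z.1.2) (q' := z.2.2)
  have hW0 := W2_nonneg (c := fun (u v : U) => dist u v ^ 2) (μ := z.1.2) (ν := z.2.2)
  rw [Real.norm_of_nonneg (sq_nonneg _)]
  simp only [Pi.add_apply]
  nlinarith [mul_le_mul hWD hWD hW0 (hW0.trans hWD), sq_abs (z.1.1 - z.2.1),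
    sq_nonneg (z.1.1 + z.2.1), abs_nonneg (z.1.1 - z.2.1),
    sq_nonneg (|z.1.1 - z.2.1| - W2 (fun (u v : U) => dist u v ^ 2) z.1.2 z.2.2)]

theorem W2sq_Pext_le [CompactSpace U] [IsProbabilityMeasure ξ] [IsProbabilityMeasure ξ']
    (hξ : ∀ᵐ y ∂ξ, IsProbabilityMeasure y.2) (hξ' : ∀ᵐ y ∂ξ', IsProbabilityMeasure y.2)
    (hint : Integrable (fun y => y.1 ^ 2) ξ) (hint' : Integrable (fun y => y.1 ^ 2) ξ') :
    W2sq (fun (p q : ℝ × U) => (|p.1 - q.1| + dist p.2 q.2) ^ 2) (Pext U ξ) (Pext U ξ') ≤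
      W2sq (fun (p q : ℝ × Measure U) =>
        (|p.1 - q.1| + W2 (fun (u v : U) => dist u v ^ 2) p.2 q.2) ^ 2) ξ ξ' := by
  refine le_W2sq fun π h₁ h₂ => ?_
  have : IsProbabilityMeasure π := isProbabilityMeasure_of_map_fst h₁
  rw [← ENNReal.ofReal_le_ofReal_iff (integral_nonneg fun _ => sq_nonneg _),
    ofReal_integral_eq_lintegral_ofReal
      (integrable_abs_sub_add_W2_sq h₁ h₂ hξ hξ' hint hint') (ae_of_all _ fun _ => sq_nonneg _)]
  exact ofReal_W2sq_Pext_le_lintegral h₁ h₂ hξ hξ'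

end PextCoupling

end

theorem stmt8_general {l : ℕ} (T : ℝ)
    (U : Set (EuclideanSpace ℝ (Fin l))) (hU : IsCompact U) (M : ℝ) (hM : 0 < M)
    (b : ℝ → ℝ → Measure (ℝ × U) → U → ℝ)
    (hLip : ∀ t ∈ Set.Icc (0:ℝ) T, ∀ (u : U) (x x' : ℝ) (ρ ρ' : Measure (ℝ × U)),
      IsProbabilityMeasure ρ → IsProbabilityMeasure ρ' →
      Integrable (fun p => p.1 ^ 2) ρ → Integrable (fun p => p.1 ^ 2) ρ' →
      |b t x ρ u - b t x' ρ' u| ≤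
        M * (|x - x'| +
          W2 (fun (p q : ℝ × U) => (|p.1 - q.1| + dist p.2 q.2) ^ 2) ρ ρ')) :
    ∀ t ∈ Set.Icc (0:ℝ) T, ∀ (u : U) (x x' : ℝ) (ξ ξ' : Measure (ℝ × Measure U)),
      IsProbabilityMeasure ξ → IsProbabilityMeasure ξ' →
      (∀ᵐ p ∂ξ, IsProbabilityMeasure p.2) → (∀ᵐ p ∂ξ', IsProbabilityMeasure p.2) →
      Integrable (fun p => p.1 ^ 2) ξ → Integrable (fun p => p.1 ^ 2) ξ' →
      |b t x (Pext U ξ) u - b t x' (Pext U ξ') u| ≤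
        M * (|x - x'| +
          W2 (fun (p q : ℝ × Measure U) =>
            (|p.1 - q.1| + W2 (fun (uu vv : U) => dist uu vv ^ 2) p.2 q.2) ^ 2) ξ ξ') := by
  intro t ht u x x' ξ ξ' _ _ hae hae' hint hint'
  have : CompactSpace U := isCompact_iff_compactSpace.mp hU
  refine (hLip t ht u x x' _ _ (isProbabilityMeasure_Pext hae) (isProbabilityMeasure_Pext hae')
    (integrable_fst_sq_Pext hae hint) (integrable_fst_sq_Pext hae' hint')).trans ?_
  refine mul_le_mul_of_nonneg_left ?_ hM.le
  gcongr
  exact Real.sqrt_le_sqrt (W2sq_Pext_le hae hae' hint hint')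

/-- If `b : [0,T] × ℝ × 𝒫₂(ℝ×U) × U → ℝ` is uniformly Lipschitz in
`(x, ρ)` with constant `M` (with `W_{2,ℝ×U}` for the metric `|x-x'| + |u-u'|`), then its
extension `b̃(t, x, ξ, u) = b(t, x, 𝒫(ξ), u)` is uniformly Lipschitz in `(x, ξ)` with the
same constant `M` (with `W_{2,ℝ×𝒫(U)}` for the metric `|x-x'| + W_{2,U}(q,q')`). -/
theorem stmt8 {l : ℕ} (T : ℝ) (hT : 0 < T)
    (U : Set (EuclideanSpace ℝ (Fin l))) (hU : IsCompact U) (M : ℝ) (hM : 0 < M)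
    (b : ℝ → ℝ → Measure (ℝ × U) → U → ℝ)
    (hLip : ∀ t ∈ Set.Icc (0:ℝ) T, ∀ (u : U) (x x' : ℝ) (ρ ρ' : Measure (ℝ × U)),
      IsProbabilityMeasure ρ → IsProbabilityMeasure ρ' →
      Integrable (fun p => p.1 ^ 2) ρ → Integrable (fun p => p.1 ^ 2) ρ' →
      |b t x ρ u - b t x' ρ' u| ≤
        M * (|x - x'| +
          W2 (fun (p q : ℝ × U) => (|p.1 - q.1| + dist p.2 q.2) ^ 2) ρ ρ')) :
    ∀ t ∈ Set.Icc (0:ℝ) T, ∀ (u : U) (x x' : ℝ) (ξ ξ' : Measure (ℝ × Measure U)),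
      IsProbabilityMeasure ξ → IsProbabilityMeasure ξ' →
      (∀ᵐ p ∂ξ, IsProbabilityMeasure p.2) → (∀ᵐ p ∂ξ', IsProbabilityMeasure p.2) →
      Integrable (fun p => p.1 ^ 2) ξ → Integrable (fun p => p.1 ^ 2) ξ' →
      |b t x (Pext U ξ) u - b t x' (Pext U ξ') u| ≤
        M * (|x - x'| +
          W2 (fun (p q : ℝ × Measure U) =>
            (|p.1 - q.1| + W2 (fun (uu vv : U) => dist uu vv ^ 2) p.2 q.2) ^ 2) ξ ξ') :=
  stmt8_general T U hU M hM b hLip
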